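/- arXiv:1811.00288 — 4 statements merged into one kernel-verified Lean document; each statement's English description precedes it below -/
import Mathlib

section
/- Two group chains {G_ℓ} and {H_ℓ} with G₀ = H₀ are equivalent (intertwined) if and only if there exists a G₀-equivariant homeomorphism τ : lim← G₀/G_ℓ → lim← H₀/H_ℓ sending the canonical basepoint (eG_ℓ) to the canonical basepoint (eH_ℓ). -/
/-!
An interleaving `G (f (k+1)) ≤ H (g k) ≤ G (f k)` induces mutually inverse continuous maps
`x ↦ (x (f (k+1)) mod H k)ₖ` and `y ↦ (y (g k) mod G k)ₖ`, which are equivariant and pointed.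

Conversely, a pointed equivariant `τ` fixes every constant sequence `(h G ℓ)ₗ`. The `n`-th
coordinate of `τ` is a continuous map into a discrete space, hence constant on a cylinder
`{x | x ℓ = e ℓ for ℓ ≤ m}` around the basepoint `e`; for `h ∈ G m` the constant sequence at `h`
lies in that cylinder, so `h ∈ H n`. The same argument for `τ⁻¹` makes each chain cofinal in the
other, and mutually cofinal antitone sequences can be interleaved.
-/

/-- Each finite quotient `G₀ ⧸ G ℓ` is given the discrete topology. -/
instance quotientDiscrete {G₀ : Type*} [Group G₀] (H : Subgroup G₀) :
    TopologicalSpace (G₀ ⧸ H) := ⊥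

/-- The inverse limit `lim← G₀⧸G ℓ` of the quotients of a group chain, realized inside
the product `Π ℓ, G₀ ⧸ G ℓ`. -/
def chainLimit {G₀ : Type*} [Group G₀] (G : ℕ → Subgroup G₀) : Set (∀ ℓ, G₀ ⧸ G ℓ) :=
  {x | ∀ (ℓ : ℕ) (g : G₀), x (ℓ + 1) = (QuotientGroup.mk g : G₀ ⧸ G (ℓ + 1)) →
      x ℓ = (QuotientGroup.mk g : G₀ ⧸ G ℓ)}

open Subgroup

instance {G₀ : Type*} [Group G₀] (H : Subgroup G₀) : DiscreteTopology (G₀ ⧸ H) := ⟨rfl⟩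

theorem exists_strictMono_interleaving {α : Type*} [Preorder α] {a b : ℕ → α}
    (ha : Antitone a) (hb : Antitone b)
    (hab : ∀ n, ∃ m, a m ≤ b n) (hba : ∀ n, ∃ m, b m ≤ a n) :
    ∃ f g : ℕ → ℕ, StrictMono f ∧ StrictMono g ∧
      (∀ k, a (f (k + 1)) ≤ b (g k)) ∧ (∀ k, b (g k) ≤ a (f k)) := by
  choose A hA using hab
  choose B hB using hba
  let step : ℕ × ℕ → ℕ × ℕ := fun p =>
    (max (A p.2) (p.1 + 1), max (B (max (A p.2) (p.1 + 1))) (p.2 + 1))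
  let p : ℕ → ℕ × ℕ := fun k => step^[k] (0, B 0)
  have hp : ∀ k, p (k + 1) = step (p k) := fun k => Function.iterate_succ_apply' step k _
  refine ⟨fun k => (p k).1, fun k => (p k).2, strictMono_nat_of_lt_succ fun k => ?_,
    strictMono_nat_of_lt_succ fun k => ?_, fun k => ?_, fun k => ?_⟩
  · rw [hp]; exact (Nat.lt_succ_self _).trans_le (le_max_right _ _)
  · rw [hp]; exact (Nat.lt_succ_self _).trans_le (le_max_right _ _)
  · dsimp only; rw [hp]; exact (ha (le_max_left _ _)).trans (hA _)
  · cases k with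
    | zero => exact hB 0
    | succ k => dsimp only; rw [hp]; exact (hb (le_max_left _ _)).trans (hB _)

theorem Continuous.exists_eq_of_forall_le_eq {Z : ℕ → Type*} [∀ n, TopologicalSpace (Z n)]
    {Y : Type*} [TopologicalSpace Y] [DiscreteTopology Y] {S : Set (∀ n, Z n)} {F : S → Y}
    (hF : Continuous F) (e : S) :
    ∃ m, ∀ x : S, (∀ ℓ ≤ m, (x : ∀ n, Z n) ℓ = (e : ∀ n, Z n) ℓ) → F x = F e := by
  have hfiber : F ⁻¹' {F e} ∈ nhds e :=
    hF.continuousAt.preimage_mem_nhds ((isOpen_discrete _).mem_nhds rfl)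
  rw [nhds_subtype, Filter.mem_comap, nhds_pi] at hfiber
  obtain ⟨t, ht, hsub⟩ := hfiber
  obtain ⟨I, hI, u, hu, hIu⟩ := Filter.mem_pi.1 ht
  obtain ⟨m, hm⟩ := hI.bddAbove
  refine ⟨m, fun x hx => hsub (hIu fun i hi => ?_)⟩
  rw [hx i (hm hi)]
  exact mem_of_mem_nhds (hu i)

namespace Subgroup

variable {G₀ : Type*} [Group G₀] {A B C : Subgroup G₀}

theorem quotientMapOfLE_quotientMapOfLE (hAB : A ≤ B) (hBC : B ≤ C) (q : G₀ ⧸ A) :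
    quotientMapOfLE hBC (quotientMapOfLE hAB q) = quotientMapOfLE (hAB.trans hBC) q := by
  induction q using QuotientGroup.induction_on; rfl

theorem quotientMapOfLE_smul (h : A ≤ B) (g : G₀) (q : G₀ ⧸ A) :
    quotientMapOfLE h (g • q) = g • quotientMapOfLE h q := by
  induction q using QuotientGroup.induction_on; rfl

end Subgroup

namespace chainLimit

variable {G₀ : Type*} [Group G₀] {G H : ℕ → Subgroup G₀}

theorem _root_.mem_chainLimit_iff (hG : Antitone G) {x : ∀ ℓ, G₀ ⧸ G ℓ} :
    x ∈ chainLimit G ↔ ∀ ℓ, quotientMapOfLE (hG ℓ.le_succ) (x (ℓ + 1)) = x ℓ := by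
  refine forall_congr' fun ℓ => ⟨fun hx => ?_, fun hx g hg => ?_⟩
  · obtain ⟨g, hg⟩ := QuotientGroup.mk_surjective (x (ℓ + 1))
    rw [← hg, hx g hg.symm]
    rfl
  · rw [← hx, hg]
    rfl

theorem quotientMapOfLE_apply_of_le (hG : Antitone G) {x : ∀ ℓ, G₀ ⧸ G ℓ}
    (hx : x ∈ chainLimit G) {m n : ℕ} (hmn : m ≤ n) :
    quotientMapOfLE (hG hmn) (x n) = x m := by
  induction n, hmn using Nat.le_induction with
  | base =>
    obtain ⟨g, hg⟩ := QuotientGroup.mk_surjective (x m)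
    rw [← hg]
    rfl
  | succ n hmn ih =>
    rw [← ih, ← (mem_chainLimit_iff hG).1 hx n, quotientMapOfLE_quotientMapOfLE]

def const (hG : Antitone G) (g : G₀) : chainLimit G :=
  ⟨fun _ => QuotientGroup.mk g, (mem_chainLimit_iff hG).2 fun _ => rfl⟩

section map

variable (hG : Antitone G) (hH : Antitone H) {φ : ℕ → ℕ} (hφ : Monotone φ)
  (hφle : ∀ k, G (φ k) ≤ H k)

def map (x : chainLimit G) : chainLimit H :=
  ⟨fun k => quotientMapOfLE (hφle k) ((x : ∀ ℓ, G₀ ⧸ G ℓ) (φ k)),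
    (mem_chainLimit_iff hH).2 fun k => by
      rw [quotientMapOfLE_quotientMapOfLE,
        ← quotientMapOfLE_apply_of_le hG x.2 (hφ k.le_succ), quotientMapOfLE_quotientMapOfLE]⟩

theorem continuous_map : Continuous (map hG hH hφ hφle) :=
  (continuous_pi fun k => continuous_of_discreteTopology.comp
    ((continuous_apply (φ k)).comp continuous_subtype_val)).subtype_mk _

theorem map_smul {g : G₀} {x y : chainLimit G}
    (hxy : (y : ∀ ℓ, G₀ ⧸ G ℓ) = g • (x : ∀ ℓ, G₀ ⧸ G ℓ)) :
    (map hG hH hφ hφle y : ∀ ℓ, G₀ ⧸ H ℓ) = g • (map hG hH hφ hφle x : ∀ ℓ, G₀ ⧸ H ℓ) := by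
  funext k
  simp only [map, hxy, Pi.smul_apply, quotientMapOfLE_smul]

theorem map_one {x : chainLimit G}
    (hx : ∀ ℓ, (x : ∀ ℓ, G₀ ⧸ G ℓ) ℓ = (QuotientGroup.mk 1 : G₀ ⧸ G ℓ)) (k : ℕ) :
    (map hG hH hφ hφle x : ∀ ℓ, G₀ ⧸ H ℓ) k = (QuotientGroup.mk 1 : G₀ ⧸ H k) := by
  simp only [map, hx]
  rfl

theorem map_map {ψ : ℕ → ℕ} (hψ : Monotone ψ) (hψle : ∀ k, H (ψ k) ≤ G k)
    (hφψ : ∀ k, k ≤ φ (ψ k)) (x : chainLimit G) :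
    map hH hG hψ hψle (map hG hH hφ hφle x) = x := by
  ext k
  simp only [map, quotientMapOfLE_quotientMapOfLE]
  exact quotientMapOfLE_apply_of_le hG x.2 (hφψ k)

end map

def homeomorph (hG : Antitone G) (hH : Antitone H) {φ ψ : ℕ → ℕ} (hφ : Monotone φ)
    (hψ : Monotone ψ) (hφle : ∀ k, G (φ k) ≤ H k) (hψle : ∀ k, H (ψ k) ≤ G k)
    (hφψ : ∀ k, k ≤ φ (ψ k)) (hψφ : ∀ k, k ≤ ψ (φ k)) : chainLimit G ≃ₜ chainLimit H where
  toFun := map hG hH hφ hφle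
  invFun := map hH hG hψ hψle
  left_inv := map_map hG hH hφ hφle hψ hψle hφψ
  right_inv := map_map hH hG hψ hψle hφ hφle hψφ
  continuous_toFun := continuous_map hG hH hφ hφle
  continuous_invFun := continuous_map hH hG hψ hψle

theorem apply_const_eq_const (hG : Antitone G) (hH : Antitone H)
    {T : chainLimit G → chainLimit H}
    (hsmul : ∀ (g : G₀) (x y : chainLimit G),
      (y : ∀ ℓ, G₀ ⧸ G ℓ) = g • (x : ∀ ℓ, G₀ ⧸ G ℓ) →
      (T y : ∀ ℓ, G₀ ⧸ H ℓ) = g • (T x : ∀ ℓ, G₀ ⧸ H ℓ))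
    (hone : ∀ x : chainLimit G,
      (∀ ℓ, (x : ∀ ℓ, G₀ ⧸ G ℓ) ℓ = (QuotientGroup.mk 1 : G₀ ⧸ G ℓ)) →
      (∀ ℓ, (T x : ∀ ℓ, G₀ ⧸ H ℓ) ℓ = (QuotientGroup.mk 1 : G₀ ⧸ H ℓ)))
    (g : G₀) : T (const hG g) = const hH g := by
  have hconst : ∀ {K : ℕ → Subgroup G₀} (hK : Antitone K),
      (const hK g : ∀ ℓ, G₀ ⧸ K ℓ) = g • (const hK 1 : ∀ ℓ, G₀ ⧸ K ℓ) := fun _ => by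
    funext ℓ
    simp [const, MulAction.Quotient.smul_mk]
  ext1
  rw [hsmul g _ _ (hconst hG), hconst hH]
  congr 1
  exact funext (hone _ fun _ => rfl)

theorem exists_le_of_continuous (hG : Antitone G) (hH : Antitone H)
    {T : chainLimit G → chainLimit H} (hT : Continuous T)
    (hconst : ∀ g, T (const hG g) = const hH g) (n : ℕ) : ∃ m, G m ≤ H n := by
  obtain ⟨m, hm⟩ := ((continuous_apply n).comp (continuous_subtype_val.comp hT)
    ).exists_eq_of_forall_le_eq (const hG 1)
  refine ⟨m, fun h hh => ?_⟩
  have hcyl : ∀ ℓ ≤ m, (QuotientGroup.mk h : G₀ ⧸ G ℓ) = QuotientGroup.mk 1 := fun ℓ hℓ =>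
    QuotientGroup.eq.2 (by simpa using hG hℓ hh)
  have hTh := hm (const hG h) hcyl
  simp only [Function.comp_apply, hconst] at hTh
  have hHn : (QuotientGroup.mk h : G₀ ⧸ H n) = QuotientGroup.mk 1 := hTh
  simpa using QuotientGroup.eq.1 hHn.symm

end chainLimit

theorem chains_equivalent_iff_pointed_equivariant_homeo_general {G₀ : Type*} [Group G₀]
    (G H : ℕ → Subgroup G₀) (hG : Antitone G) (hH : Antitone H) :
    (∃ f g : ℕ → ℕ, StrictMono f ∧ StrictMono g ∧
        (∀ k, G (f (k + 1)) ≤ H (g k)) ∧ (∀ k, H (g k) ≤ G (f k)))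
    ↔
    ∃ τ : chainLimit G ≃ₜ chainLimit H,
      (∀ (g : G₀) (x y : chainLimit G),
          (y : ∀ ℓ, G₀ ⧸ G ℓ) = g • (x : ∀ ℓ, G₀ ⧸ G ℓ) →
          (τ y : ∀ ℓ, G₀ ⧸ H ℓ) = g • (τ x : ∀ ℓ, G₀ ⧸ H ℓ)) ∧
      (∀ x : chainLimit G,
          (∀ ℓ, (x : ∀ ℓ, G₀ ⧸ G ℓ) ℓ = (QuotientGroup.mk 1 : G₀ ⧸ G ℓ)) →
          (∀ ℓ, (τ x : ∀ ℓ, G₀ ⧸ H ℓ) ℓ = (QuotientGroup.mk 1 : G₀ ⧸ H ℓ))) := by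
  constructor
  · rintro ⟨f, g, hf, hg, hfg, hgf⟩
    have hφ : Monotone fun k => f (k + 1) := hf.monotone.comp fun _ _ h => Nat.succ_le_succ h
    have hφle : ∀ k, G (f (k + 1)) ≤ H k := fun k => (hfg k).trans (hH hg.le_apply)
    have hψle : ∀ k, H (g k) ≤ G k := fun k => (hgf k).trans (hG hf.le_apply)
    exact ⟨chainLimit.homeomorph hG hH hφ hg.monotone hφle hψle
        (fun k => hg.le_apply.trans ((g k).le_succ.trans hf.le_apply))
        (fun k => (k.le_succ.trans hf.le_apply).trans hg.le_apply),
      fun _ _ _ => chainLimit.map_smul hG hH hφ hφle,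
      fun _ => chainLimit.map_one hG hH hφ hφle⟩
  · rintro ⟨τ, hsmul, hone⟩
    have hτ := chainLimit.apply_const_eq_const hG hH hsmul hone
    exact exists_strictMono_interleaving hG hH
      (chainLimit.exists_le_of_continuous hG hH τ.continuous hτ)
      (chainLimit.exists_le_of_continuous hH hG τ.symm.continuous
        fun g => τ.symm_apply_eq.2 (hτ g).symm)

/-- Two group chains `{G ℓ}` and `{H ℓ}` of finite-index subgroups with `G 0 = H 0 = G₀`
are equivalent (intertwined) if and only if there is a `G₀`-equivariant homeomorphism
`τ : lim← G₀⧸G ℓ → lim← G₀⧸H ℓ` sending the canonical basepoint `(eG ℓ)` to the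
canonical basepoint `(eH ℓ)`. -/
theorem chains_equivalent_iff_pointed_equivariant_homeo {G₀ : Type*} [Group G₀]
    (G H : ℕ → Subgroup G₀) (hG : Antitone G) (hH : Antitone H)
    (hG0 : G 0 = ⊤) (hH0 : H 0 = ⊤)
    (hGfin : ∀ ℓ, (G ℓ).FiniteIndex) (hHfin : ∀ ℓ, (H ℓ).FiniteIndex) :
    (∃ f g : ℕ → ℕ, StrictMono f ∧ StrictMono g ∧
        (∀ k, G (f (k + 1)) ≤ H (g k)) ∧ (∀ k, H (g k) ≤ G (f k)))
    ↔
    ∃ τ : chainLimit G ≃ₜ chainLimit H,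
      (∀ (g : G₀) (x y : chainLimit G),
          (y : ∀ ℓ, G₀ ⧸ G ℓ) = g • (x : ∀ ℓ, G₀ ⧸ G ℓ) →
          (τ y : ∀ ℓ, G₀ ⧸ H ℓ) = g • (τ x : ∀ ℓ, G₀ ⧸ H ℓ)) ∧
      (∀ x : chainLimit G,
          (∀ ℓ, (x : ∀ ℓ, G₀ ⧸ G ℓ) ℓ = (QuotientGroup.mk 1 : G₀ ⧸ G ℓ)) →
          (∀ ℓ, (τ x : ∀ ℓ, G₀ ⧸ H ℓ) ℓ = (QuotientGroup.mk 1 : G₀ ⧸ H ℓ))) :=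
  chains_equivalent_iff_pointed_equivariant_homeo_general G H hG hH
end

section
/- Let (p_i) be a strictly increasing sequence of primes and define K_ℓ = (p₁p₂⋯p_ℓ)ℤ ⊆ ℤ. Then there is no injective endomorphism φ : ℤ → ℤ with finite-index image such that the chain {K_ℓ} is return equivalent to the chain {φ^ℓ(ℤ)}. Equivalently, for φ given by multiplication by m with |m| > 1, the chains {(p₁⋯p_ℓ)ℤ} and {m^ℓℤ} are not intertwined after any truncation, because the set of primes dividing some p₁⋯p_ℓ is infinite while the set of primes dividing powers of m is finite. -/
/-! A power of `m ≠ 0` is divisible only by primes `q ≤ |m|`, whereas the products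
`p₀ ⋯ p_{ℓ-1}` eventually contain primes `p_j > |m|` (as `p_j ≥ j`). So the inclusion
`m^e ℤ ⊆ (p₀ ⋯ p_{ℓ-1})ℤ` demanded by any intertwining fails once `ℓ` is large. -/

theorem Int.zmultiples_le_zmultiples_iff {a b : ℤ} :
    AddSubgroup.zmultiples a ≤ AddSubgroup.zmultiples b ↔ b ∣ a := by
  rw [AddSubgroup.zmultiples_le, Int.mem_zmultiples_iff]

theorem Nat.Prime.le_natAbs_of_dvd_pow {q : ℕ} (hq : q.Prime) {m : ℤ} (hm : m ≠ 0) {e : ℕ}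
    (h : (q : ℤ) ∣ m ^ e) : q ≤ m.natAbs :=
  Nat.le_of_dvd (Int.natAbs_pos.mpr hm) (Int.natCast_dvd.mp (Int.Prime.dvd_pow' hq h))

theorem prod_range_primes_not_dvd_pow {p : ℕ → ℕ} (hmono : StrictMono p)
    (hprime : ∀ i, (p i).Prime) {m : ℤ} (hm : m ≠ 0) {N : ℕ} (hN : m.natAbs + 1 < N)
    (e : ℕ) : ¬ (∏ t ∈ Finset.range N, (p t : ℤ)) ∣ m ^ e := by
  intro hdvd
  set j := m.natAbs + 1
  have hpj : (p j : ℤ) ∣ m ^ e :=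
    (Finset.dvd_prod_of_mem _ (Finset.mem_range.mpr hN)).trans hdvd
  have hj_le : j ≤ p j := hmono.le_apply
  have := (hprime j).le_natAbs_of_dvd_pow hm hpj
  omega

/-- Let `(p i)` be a strictly increasing sequence of primes and `K ℓ = (p 0 ⋯ p (ℓ-1))ℤ`.
For any integer `m` with `|m| > 1` (so that multiplication by `m` is a proper injective
endomorphism of `ℤ` with finite-index image), the chain `{K ℓ}` is not return equivalent
to the chain `{m^ℓ ℤ}`: no truncations of the two chains are intertwined. -/
theorem primes_chain_not_return_equivalent_to_endomorphism_chain
    (p : ℕ → ℕ) (hmono : StrictMono p) (hprime : ∀ i, (p i).Prime)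
    (m : ℤ) (hm : 1 < |m|) :
    ¬ ∃ (k k' : ℕ) (f g : ℕ → ℕ), StrictMono f ∧ StrictMono g ∧
      (∀ i : ℕ,
        AddSubgroup.zmultiples ((∏ t ∈ Finset.range (k + f (i + 1)), (p t : ℤ))) ≤
          AddSubgroup.zmultiples (m ^ (k' + g i)) ∧
        AddSubgroup.zmultiples (m ^ (k' + g i)) ≤
          AddSubgroup.zmultiples ((∏ t ∈ Finset.range (k + f i), (p t : ℤ)))) := by
  rintro ⟨k, k', f, g, hf, -, h⟩
  have hm0 : m ≠ 0 := by rintro rfl; simp at hm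
  set i := m.natAbs + 2
  have hi : i ≤ f i := hf.le_apply
  exact prod_range_primes_not_dvd_pow hmono hprime hm0 (by omega) _
    (Int.zmultiples_le_zmultiples_iff.mp (h i).2)
end

section
/- In the discrete Heisenberg group ℍ, with G_ℓ = {(2^ℓ a, 2^ℓ b, 4^ℓ c)} and C_ℓ its normal core {(4^ℓ a, 4^ℓ b, 4^ℓ c)}, one has G_{2ℓ} ⊆ C_ℓ for all ℓ ≥ 0. Consequently the chain {G_ℓ} is equivalent (intertwined) with the chain of its normal cores {C_ℓ}. -/
/-- The discrete Heisenberg group: `ℤ³` with multiplication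
`(a,b,c)·(a',b',c') = (a+a', b+b', c+c'+a·b')`. -/
def Heis : Type := ℤ × ℤ × ℤ

namespace Heis

instance : Mul Heis := ⟨fun x y => (x.1 + y.1, x.2.1 + y.2.1, x.2.2 + y.2.2 + x.1 * y.2.1)⟩
instance : One Heis := ⟨((0 : ℤ), (0 : ℤ), (0 : ℤ))⟩
instance : Inv Heis := ⟨fun x => (-x.1, -x.2.1, -x.2.2 + x.1 * x.2.1)⟩

lemma mul_def (x y : Heis) :
    x * y = (x.1 + y.1, x.2.1 + y.2.1, x.2.2 + y.2.2 + x.1 * y.2.1) := rfl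
lemma one_def : (1 : Heis) = ((0 : ℤ), (0 : ℤ), (0 : ℤ)) := rfl
lemma inv_def (x : Heis) : x⁻¹ = (-x.1, -x.2.1, -x.2.2 + x.1 * x.2.1) := rfl

instance : Group Heis :=
  Group.ofLeftAxioms
    (fun a b c => by
      rw [mul_def, mul_def, mul_def, mul_def]
      refine Prod.ext ?_ (Prod.ext ?_ ?_) <;> dsimp <;> ring)
    (fun a => by
      rw [mul_def, one_def]
      refine Prod.ext ?_ (Prod.ext ?_ ?_) <;> dsimp <;> ring)
    (fun a => by
      rw [mul_def, one_def, inv_def]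
      refine Prod.ext ?_ (Prod.ext ?_ ?_) <;> dsimp <;> ring)

private lemma pow4 (ℓ : ℕ) : (4 : ℤ) ^ ℓ = 2 ^ ℓ * 2 ^ ℓ := by
  rw [← mul_pow]; norm_num

/-- The subgroup `G_ℓ = {(2^ℓ a, 2^ℓ b, 4^ℓ c) : a, b, c ∈ ℤ}` of the Heisenberg group
(the image of the ℓ-fold iterate of `(a,b,c) ↦ (2a,2b,4c)`). -/
def G (ℓ : ℕ) : Subgroup Heis where
  carrier := {x | ∃ a b c : ℤ, x = (2 ^ ℓ * a, 2 ^ ℓ * b, 4 ^ ℓ * c)}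
  one_mem' := ⟨0, 0, 0, by simp [one_def]; rfl⟩
  mul_mem' := by
    rintro x y ⟨a, b, c, rfl⟩ ⟨a', b', c', rfl⟩
    refine ⟨a + a', b + b', c + c' + a * b', ?_⟩
    refine (mul_def _ _).trans ?_
    refine Prod.ext ?_ (Prod.ext ?_ ?_) <;> dsimp <;> (try rw [pow4]) <;> ring
  inv_mem' := by
    rintro x ⟨a, b, c, rfl⟩
    refine ⟨-a, -b, -c + a * b, ?_⟩
    refine (inv_def _).trans ?_
    refine Prod.ext ?_ (Prod.ext ?_ ?_) <;> dsimp <;> (try rw [pow4]) <;> ring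

/-- The subgroup `C_ℓ = {(4^ℓ a, 4^ℓ b, 4^ℓ c) : a, b, c ∈ ℤ}` of the Heisenberg group. -/
def C (ℓ : ℕ) : Subgroup Heis where
  carrier := {x | ∃ a b c : ℤ, x = (4 ^ ℓ * a, 4 ^ ℓ * b, 4 ^ ℓ * c)}
  one_mem' := ⟨0, 0, 0, by simp [one_def]; rfl⟩
  mul_mem' := by
    rintro x y ⟨a, b, c, rfl⟩ ⟨a', b', c', rfl⟩
    refine ⟨a + a', b + b', c + c' + 4 ^ ℓ * (a * b'), ?_⟩
    refine (mul_def _ _).trans ?_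
    refine Prod.ext ?_ (Prod.ext ?_ ?_) <;> dsimp <;> ring
  inv_mem' := by
    rintro x ⟨a, b, c, rfl⟩
    refine ⟨-a, -b, -c + 4 ^ ℓ * (a * b), ?_⟩
    refine (inv_def _).trans ?_
    refine Prod.ext ?_ (Prod.ext ?_ ?_) <;> dsimp <;> ring

end Heis

/-! Both inclusions are divisibility of the coordinates: `2^{2ℓ} = 4^ℓ` and `4^ℓ ∣ 4^{2ℓ}` give
`G_{2ℓ} ⊆ C_ℓ`, and `4^ℓ = 2^ℓ · 2^ℓ` gives `C_ℓ ⊆ G_ℓ`. Along the indices `2^k` the two chains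
then interleave. -/

theorem exists_strictMono_interleave_of_le {α : Type*} [LE α] {G C : ℕ → α}
    (hGC : ∀ ℓ, G (2 * ℓ) ≤ C ℓ) (hCG : ∀ ℓ, C ℓ ≤ G ℓ) :
    ∃ f g : ℕ → ℕ, StrictMono f ∧ StrictMono g ∧
      (∀ k, G (f (k + 1)) ≤ C (g k)) ∧ (∀ k, C (g k) ≤ G (f k)) := by
  have hmono : StrictMono fun k : ℕ => 2 ^ k := fun _ _ => Nat.pow_lt_pow_right one_lt_two
  refine ⟨fun k => 2 ^ k, fun k => 2 ^ k, hmono, hmono, fun k => ?_, fun k => hCG (2 ^ k)⟩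
  simpa only [pow_succ'] using hGC (2 ^ k)

namespace Heis

lemma G_two_mul_le_C (ℓ : ℕ) : G (2 * ℓ) ≤ C ℓ := by
  rintro _ ⟨a, b, c, rfl⟩
  have h2 : (2 : ℤ) ^ (2 * ℓ) = 4 ^ ℓ := by rw [pow_mul]; norm_num
  exact ⟨a, b, 4 ^ ℓ * c, by rw [h2, two_mul ℓ, pow_add, mul_assoc]⟩

lemma C_le_G (ℓ : ℕ) : C ℓ ≤ G ℓ := by
  rintro _ ⟨a, b, c, rfl⟩
  exact ⟨2 ^ ℓ * a, 2 ^ ℓ * b, c, by rw [pow4, mul_assoc, mul_assoc]⟩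

end Heis

/-- In the discrete Heisenberg group, `G_{2ℓ} ⊆ C_ℓ ⊆ G_ℓ` for all `ℓ`; consequently
the chain `{G_ℓ}` is equivalent (intertwined) with the chain `{C_ℓ}` of its normal
cores. -/
theorem heisenberg_chain_equivalent_normal_cores :
    (∀ ℓ : ℕ, Heis.G (2 * ℓ) ≤ Heis.C ℓ) ∧
    (∀ ℓ : ℕ, Heis.C ℓ ≤ Heis.G ℓ) ∧
    (∃ f g : ℕ → ℕ, StrictMono f ∧ StrictMono g ∧
      (∀ k, Heis.G (f (k + 1)) ≤ Heis.C (g k)) ∧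
      (∀ k, Heis.C (g k) ≤ Heis.G (f k))) :=
  ⟨Heis.G_two_mul_le_C, Heis.C_le_G,
    exists_strictMono_interleave_of_le Heis.G_two_mul_le_C Heis.C_le_G⟩
end

section
/- Let G ≤ GL(n, ℤ), H = ℤⁿ ⋊ G, p > 1, and φ(n, g) = (p·n, g). Then the kernel of the group chain {φ^ℓ(H)}, namely ⋂_{ℓ≥0} φ^ℓ(H) = ⋂_{ℓ≥0} (p^ℓℤⁿ ⋊ G), equals {0} ⋊ G ≅ G. In particular, if G is finite, H is scale-invariant. -/
/-! Since `φ^ℓ(v, g) = (p^ℓ v, g)`, every element of the kernel has translation part divisible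
by all powers of `p`, hence zero, while `φ` fixes `{0} ⋊ G` pointwise. -/

variable (n : ℕ) (G : Subgroup (Matrix.GeneralLinearGroup (Fin n) ℤ))

/-- The semidirect product `H = ℤⁿ ⋊ G` for a subgroup `G ≤ GL(n, ℤ)`, with product
`(n₁, g₁)·(n₂, g₂) = (n₁ + g₁·n₂, g₁g₂)` where `g·v` is matrix-vector multiplication. -/
def SDProd : Type := (Fin n → ℤ) × G

namespace SDProd

variable {n G}

/-- The matrix action of an element of `G` on `ℤⁿ`. -/
def act (g : G) (v : Fin n → ℤ) : Fin n → ℤ :=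
  ((g : Matrix.GeneralLinearGroup (Fin n) ℤ) : Matrix (Fin n) (Fin n) ℤ).mulVec v

instance : Mul (SDProd n G) := ⟨fun x y => (x.1 + act x.2 y.1, x.2 * y.2)⟩
instance : One (SDProd n G) := ⟨(0, 1)⟩
instance : Inv (SDProd n G) := ⟨fun x => (-(act x.2⁻¹ x.1), x.2⁻¹)⟩

lemma mul_def (x y : SDProd n G) : x * y = (x.1 + act x.2 y.1, x.2 * y.2) := rfl
lemma one_def : (1 : SDProd n G) = (0, 1) := rfl
lemma inv_def (x : SDProd n G) : x⁻¹ = (-(act x.2⁻¹ x.1), x.2⁻¹) := rfl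

lemma act_mul (g h : G) (v : Fin n → ℤ) : act (g * h) v = act g (act h v) := by
  simp [act, Matrix.mulVec_mulVec]

lemma act_add (g : G) (v w : Fin n → ℤ) : act g (v + w) = act g v + act g w := by
  simp [act, Matrix.mulVec_add]

lemma act_zero (g : G) : act g (0 : Fin n → ℤ) = 0 := by simp [act]

lemma act_one (v : Fin n → ℤ) : act (1 : G) v = v := by simp [act, Matrix.one_mulVec]

lemma act_inv_act (g : G) (v : Fin n → ℤ) : act g (act g⁻¹ v) = v := by
  rw [← act_mul, mul_inv_cancel, act_one]

instance : Group (SDProd n G) :=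
  Group.ofLeftAxioms
    (fun x y z => Prod.ext
      (show x.1 + act x.2 y.1 + act (x.2 * y.2) z.1 = x.1 + act x.2 (y.1 + act y.2 z.1) by
        rw [act_add, act_mul, add_assoc])
      (show x.2 * y.2 * z.2 = x.2 * (y.2 * z.2) from mul_assoc _ _ _))
    (fun x => Prod.ext (show (0 : Fin n → ℤ) + act 1 x.1 = x.1 by rw [act_one, zero_add])
      (show (1 : G) * x.2 = x.2 from one_mul _))
    (fun x => Prod.ext
      (show -(act x.2⁻¹ x.1) + act x.2⁻¹ x.1 = 0 from neg_add_cancel _)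
      (show x.2⁻¹ * x.2 = 1 from inv_mul_cancel _))

/-- The self-embedding `(v, g) ↦ (p·v, g)` of `H = ℤⁿ ⋊ G`. -/
def phi (p : ℕ) : Monoid.End (SDProd n G) :=
  { toFun := fun x => ((p : ℤ) • x.1, x.2)
    map_one' := Prod.ext (show (p : ℤ) • (0 : Fin n → ℤ) = 0 from smul_zero _) rfl
    map_mul' := fun x y => by
      simp only [mul_def]
      refine Prod.ext ?_ rfl
      dsimp
      rw [smul_add]
      congr 1
      exact (Matrix.mulVec_smul _ _ _).symm }

/-- The embedding `G → ℤⁿ ⋊ G`, `g ↦ (0, g)`, with image `{0} ⋊ G`. -/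
def inrHom : G →* SDProd n G :=
  { toFun := fun g => (0, g)
    map_one' := rfl
    map_mul' := fun g h =>
      Prod.ext (show (0 : Fin n → ℤ) = 0 + act g 0 by rw [act_zero, add_zero]) rfl }

end SDProd

theorem Int.eq_zero_of_forall_pow_dvd {a b : ℤ} (ha : a.natAbs ≠ 1) (h : ∀ ℓ : ℕ, a ^ ℓ ∣ b) :
    b = 0 := by
  by_contra hb
  exact FiniteMultiplicity.not_iff_forall.2 h (Int.finiteMultiplicity_iff.2 ⟨ha, hb⟩)

namespace SDProd

variable {n : ℕ} {G : Subgroup (Matrix.GeneralLinearGroup (Fin n) ℤ)}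

lemma phi_pow_apply (p ℓ : ℕ) (x : SDProd n G) :
    (phi p ^ ℓ) x = ((p : ℤ) ^ ℓ • x.1, x.2) := by
  induction ℓ with
  | zero => exact Prod.ext (one_smul ℤ x.1).symm rfl
  | succ k ih =>
    rw [pow_succ', Monoid.End.coe_mul, Function.comp_apply, ih]
    exact Prod.ext ((smul_smul _ _ x.1).trans (by rw [pow_succ'])) rfl

lemma mem_range_inrHom_iff {x : SDProd n G} : x ∈ (inrHom : G →* SDProd n G).range ↔ x.1 = 0 :=
  ⟨fun ⟨_, hg⟩ => hg ▸ rfl, fun h => ⟨x.2, Prod.ext h.symm rfl⟩⟩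

lemma inrHom_injective : Function.Injective (inrHom : G →* SDProd n G) :=
  fun _ _ h => congrArg Prod.snd h

lemma range_inrHom_le_range_phi_pow (p ℓ : ℕ) :
    (inrHom : G →* SDProd n G).range ≤ (phi p ^ ℓ).range := by
  rintro _ ⟨g, rfl⟩
  exact ⟨inrHom g, (phi_pow_apply p ℓ (inrHom g)).trans (Prod.ext (smul_zero _) rfl)⟩

lemma pow_dvd_of_mem_range_phi_pow {p ℓ : ℕ} {x : SDProd n G} (hx : x ∈ (phi p ^ ℓ).range)
    (i : Fin n) : (p : ℤ) ^ ℓ ∣ x.1 i := by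
  obtain ⟨y, rfl⟩ := hx
  exact ⟨y.1 i, congrFun (congrArg Prod.fst (phi_pow_apply p ℓ y)) i⟩

end SDProd

/-- For `G ≤ GL(n, ℤ)`, `H = ℤⁿ ⋊ G`, `p > 1` and `φ(v, g) = (p·v, g)`, the kernel of
the group chain `{φ^ℓ(H)}`, namely `⋂_{ℓ≥0} (p^ℓℤⁿ ⋊ G)`, equals `{0} ⋊ G ≅ G`. -/
theorem semidirect_chain_kernel (n : ℕ)
    (G : Subgroup (Matrix.GeneralLinearGroup (Fin n) ℤ)) (p : ℕ) (hp : 1 < p) :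
    (⨅ ℓ : ℕ, MonoidHom.range ((SDProd.phi (n := n) (G := G) p) ^ ℓ)) =
      MonoidHom.range (SDProd.inrHom (n := n) (G := G)) ∧
    Nonempty (MonoidHom.range (SDProd.inrHom (n := n) (G := G)) ≃* G) := by
  have hp_natAbs : (p : ℤ).natAbs ≠ 1 := by rw [Int.natAbs_natCast]; omega
  have kernel_le :
      (⨅ ℓ : ℕ, (SDProd.phi (n := n) (G := G) p ^ ℓ).range) ≤ SDProd.inrHom.range := by
    intro x hx
    rw [Subgroup.mem_iInf] at hx
    exact SDProd.mem_range_inrHom_iff.2 <| funext fun i =>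
      Int.eq_zero_of_forall_pow_dvd hp_natAbs fun ℓ => SDProd.pow_dvd_of_mem_range_phi_pow (hx ℓ) i
  exact ⟨le_antisymm kernel_le (le_iInf (SDProd.range_inrHom_le_range_phi_pow p)),
    ⟨(MonoidHom.ofInjective SDProd.inrHom_injective).symm⟩⟩
end
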